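/- Let S be a finite regular semigroup. The congruence induced by the morphism S → S^{L′} (the action on regular L-classes within D-classes) is the largest congruence on S contained in Green's relation L. -/

import Mathlib

section Green

variable {S : Type*} [Semigroup S]

/-- `x ∈ S¹ y`. -/
def lLe (x y : S) : Prop := x = y ∨ ∃ t, x = t * y

/-- Green's `L`-equivalence: `S¹x = S¹y`. -/
def LEquiv (x y : S) : Prop := lLe x y ∧ lLe y x

/-- `x ∈ y S¹`. -/
def rLe (x y : S) : Prop := x = y ∨ ∃ t, x = y * t

/-- Green's `R`-equivalence: `xS¹ = yS¹`. -/
def REquiv (x y : S) : Prop := rLe x y ∧ rLe y x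

/-- Green's `D`-equivalence. -/
def DEquiv (x y : S) : Prop := ∃ z, LEquiv x z ∧ REquiv z y

/-- `r` is a (two-sided) semigroup congruence. -/
def IsCong (r : S → S → Prop) : Prop :=
  Equivalence r ∧ ∀ a b c : S, r a b → r (c * a) (c * b) ∧ r (a * c) (b * c)

/-- `x` and `y` induce the same partial function on the `L`-classes of `S`
(acting by `L_z · s = L_{zs}` when `L_{zs}` is `D`-equivalent to `L_z`):
the kernel congruence of `S → S^{L′}`. -/
def ActsSameOnLClasses (x y : S) : Prop :=
  ∀ z : S, (DEquiv (z * x) z ↔ DEquiv (z * y) z) ∧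
    (DEquiv (z * x) z → LEquiv (z * x) (z * y))

end Green

/-! In a finite semigroup `D` is stable: `zx D z` holds iff `zx R z`, i.e. iff `z ∈ zxS¹`. So `x`
and `y` act alike on `L`-classes iff for every `z`, `zx R z ↔ zy R z`, and then `zx L zy`. Since
`zca R z` splits into `zc R z` and `zca R zc`, and `pc R p` transfers along `L`, this relation is a
congruence. Taking `z = xx'` with `x = xx'x` shows that it is contained in `L`; a congruence inside
`L` only moves `zx` within its `L`-class, which does not change the action. -/

theorem exists_isIdempotentElem_pow {M : Type*} [Monoid M] [Finite M] (a : M) :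
    ∃ m : ℕ, IsIdempotentElem (a ^ (m + 1)) := by
  let : TopologicalSpace M := ⊥
  have : DiscreteTopology M := ⟨rfl⟩
  obtain ⟨_, ⟨m, rfl⟩, h⟩ := exists_idempotent_in_compact_subsemigroup
    (fun _ => continuous_of_discreteTopology) (Set.range fun n : ℕ => a ^ (n + 1))
    (Set.range_nonempty _) (Set.toFinite _).isCompact
    (by rintro _ ⟨m, rfl⟩ _ ⟨n, rfl⟩; exact ⟨m + n + 1, by rw [← pow_add]; ring_nf⟩)
  exact ⟨m, h⟩

theorem exists_eq_mul_mul_of_eq_mul_mul {M : Type*} [Monoid M] [Finite M] {s z a : M}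
    (h : z = s * z * a) : ∃ u, z = z * a * u := by
  have hpow : ∀ n : ℕ, z = s ^ n * z * a ^ n := by
    intro n
    induction n with
    | zero => simp
    | succ n ih =>
      calc z = s ^ n * (s * z * a) * a ^ n := by rw [← h, ← ih]
        _ = s ^ (n + 1) * z * a ^ (n + 1) := by rw [pow_succ, pow_succ']; simp only [mul_assoc]
  obtain ⟨m, hm⟩ := exists_isIdempotentElem_pow a
  refine ⟨a ^ m, ?_⟩
  calc z = s ^ (m + 1) * z * (a ^ (m + 1) * a ^ (m + 1)) := by rw [hm.eq, ← hpow]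
    _ = z * a ^ (m + 1) := by rw [← mul_assoc, ← hpow]
    _ = z * a * a ^ m := by rw [pow_succ', mul_assoc]

section GreenRelations

variable {S : Type*} [Semigroup S] {x y z c p q : S}

theorem lLe_iff : lLe x y ↔ ∃ t : WithOne S, (x : WithOne S) = t * y := by
  constructor
  · rintro (rfl | ⟨t, rfl⟩)
    · exact ⟨1, (one_mul _).symm⟩
    · exact ⟨t, WithOne.coe_mul _ _⟩
  · rintro ⟨t, h⟩
    cases t with
    | one => exact Or.inl (WithOne.coe_inj.1 (by rwa [one_mul] at h))
    | coe t => exact Or.inr ⟨t, WithOne.coe_inj.1 (by rwa [← WithOne.coe_mul] at h)⟩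

theorem rLe_iff : rLe x y ↔ ∃ t : WithOne S, (x : WithOne S) = y * t := by
  constructor
  · rintro (rfl | ⟨t, rfl⟩)
    · exact ⟨1, (mul_one _).symm⟩
    · exact ⟨t, WithOne.coe_mul _ _⟩
  · rintro ⟨t, h⟩
    cases t with
    | one => exact Or.inl (WithOne.coe_inj.1 (by rwa [mul_one] at h))
    | coe t => exact Or.inr ⟨t, WithOne.coe_inj.1 (by rwa [← WithOne.coe_mul] at h)⟩

theorem lLe_mul_left (t y : S) : lLe (t * y) y := Or.inr ⟨t, rfl⟩

theorem rLe_mul_right (y t : S) : rLe (y * t) y := Or.inr ⟨t, rfl⟩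

theorem lLe.trans (hxy : lLe x y) (hyz : lLe y z) : lLe x z := by
  obtain ⟨t, ht⟩ := lLe_iff.1 hxy
  obtain ⟨u, hu⟩ := lLe_iff.1 hyz
  exact lLe_iff.2 ⟨t * u, by rw [ht, hu, mul_assoc]⟩

theorem rLe.trans (hxy : rLe x y) (hyz : rLe y z) : rLe x z := by
  obtain ⟨t, ht⟩ := rLe_iff.1 hxy
  obtain ⟨u, hu⟩ := rLe_iff.1 hyz
  exact rLe_iff.2 ⟨u * t, by rw [ht, hu, mul_assoc]⟩

theorem LEquiv.refl (x : S) : LEquiv x x := ⟨Or.inl rfl, Or.inl rfl⟩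

theorem LEquiv.symm (h : LEquiv x y) : LEquiv y x := ⟨h.2, h.1⟩

theorem LEquiv.trans (hxy : LEquiv x y) (hyz : LEquiv y z) : LEquiv x z :=
  ⟨hxy.1.trans hyz.1, hyz.2.trans hxy.2⟩

theorem lLe.mul_right (h : lLe x y) (c : S) : lLe (x * c) (y * c) := by
  rcases h with rfl | ⟨t, rfl⟩
  · exact Or.inl rfl
  · exact Or.inr ⟨t, mul_assoc _ _ _⟩

theorem LEquiv.mul_right (h : LEquiv x y) (c : S) : LEquiv (x * c) (y * c) :=
  ⟨h.1.mul_right c, h.2.mul_right c⟩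

theorem LEquiv.dEquiv_iff (h : LEquiv x y) : DEquiv x z ↔ DEquiv y z :=
  ⟨fun ⟨w, hxw, hwz⟩ => ⟨w, h.symm.trans hxw, hwz⟩, fun ⟨w, hyw, hwz⟩ => ⟨w, h.trans hyw, hwz⟩⟩

theorem rLe_mul_mul_iff : rLe z (z * c * x) ↔ rLe z (z * c) ∧ rLe (z * c) (z * c * x) := by
  refine ⟨fun h => ⟨h.trans (rLe_mul_right _ _), ?_⟩, fun h => h.1.trans h.2⟩
  obtain ⟨t, ht⟩ := rLe_iff.1 h
  exact rLe_iff.2 ⟨t * c, by rw [WithOne.coe_mul, ht, mul_assoc]⟩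

theorem lLe.rLe_mul (hqp : lLe q p) (hp : rLe p (p * c)) : rLe q (q * c) := by
  obtain ⟨v, hv⟩ := lLe_iff.1 hqp
  obtain ⟨u, hu⟩ := rLe_iff.1 hp
  refine rLe_iff.2 ⟨u, ?_⟩
  calc (q : WithOne S) = v * (↑(p * c) * u) := by rw [hv, ← hu]
    _ = v * p * c * u := by rw [WithOne.coe_mul]; simp only [mul_assoc]
    _ = q * c * u := by rw [hv]

theorem LEquiv.rLe_mul_iff (h : LEquiv p q) : rLe p (p * c) ↔ rLe q (q * c) :=
  ⟨h.2.rLe_mul, h.1.rLe_mul⟩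

theorem dEquiv_mul_self_iff [Finite S] : DEquiv (z * x) z ↔ rLe z (z * x) := by
  have : Finite (WithOne S) := inferInstanceAs (Finite (Option S))
  refine ⟨fun ⟨w, hxw, hwz⟩ => ?_, fun h => ⟨z * x, .refl _, rLe_mul_right _ _, h⟩⟩
  obtain ⟨s, hs⟩ := lLe_iff.1 hxw.2
  obtain ⟨t, ht⟩ := rLe_iff.1 hwz.2
  obtain ⟨u, hu⟩ := exists_eq_mul_mul_of_eq_mul_mul (s := s) (z := (z : WithOne S)) (a := (x : WithOne S) * t)
    (calc (z : WithOne S) = s * ↑(z * x) * t := by rw [ht, hs]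
      _ = s * z * (x * t) := by rw [WithOne.coe_mul]; simp only [mul_assoc])
  exact rLe_iff.2 ⟨t * u, hu.trans (by rw [WithOne.coe_mul]; simp only [mul_assoc])⟩

theorem actsSameOnLClasses_iff [Finite S] : ActsSameOnLClasses x y ↔
    ∀ z : S, (rLe z (z * x) ↔ rLe z (z * y)) ∧ (rLe z (z * x) → LEquiv (z * x) (z * y)) := by
  simp only [ActsSameOnLClasses, dEquiv_mul_self_iff]

theorem actsSameOnLClasses_of_forall_lEquiv (h : ∀ z : S, LEquiv (z * x) (z * y)) :
    ActsSameOnLClasses x y :=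
  fun z => ⟨(h z).dEquiv_iff, fun _ => h z⟩

namespace ActsSameOnLClasses

theorem refl (x : S) : ActsSameOnLClasses x x := fun _ => ⟨Iff.rfl, fun _ => .refl _⟩

theorem symm (h : ActsSameOnLClasses x y) : ActsSameOnLClasses y x :=
  fun z => ⟨(h z).1.symm, fun hy => ((h z).2 ((h z).1.2 hy)).symm⟩

theorem trans (hxy : ActsSameOnLClasses x y) (hyz : ActsSameOnLClasses y z) :
    ActsSameOnLClasses x z :=
  fun w => ⟨(hxy w).1.trans (hyz w).1,
    fun hx => ((hxy w).2 hx).trans ((hyz w).2 ((hxy w).1.1 hx))⟩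

theorem mul_left [Finite S] (h : ActsSameOnLClasses x y) (c : S) :
    ActsSameOnLClasses (c * x) (c * y) := by
  rw [actsSameOnLClasses_iff] at h ⊢
  intro z
  simp only [← mul_assoc]
  exact ⟨by rw [rLe_mul_mul_iff, rLe_mul_mul_iff, (h (z * c)).1],
    fun hx => (h (z * c)).2 (rLe_mul_mul_iff.1 hx).2⟩

theorem mul_right [Finite S] (h : ActsSameOnLClasses x y) (c : S) :
    ActsSameOnLClasses (x * c) (y * c) := by
  rw [actsSameOnLClasses_iff] at h ⊢
  intro z
  simp only [← mul_assoc, rLe_mul_mul_iff (z := z)]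
  refine ⟨?_, fun hx => ((h z).2 hx.1).mul_right c⟩
  rw [← (h z).1]
  exact and_congr_right fun hx => ((h z).2 hx).rLe_mul_iff

theorem lLe {x' : S} (h : ActsSameOnLClasses x y) (hx : x = x * x' * x) : lLe x y := by
  have hD : DEquiv (x * x' * x) (x * x') := by
    rw [← hx]
    exact ⟨x, .refl x, Or.inr ⟨x, hx⟩, rLe_mul_right x x'⟩
  have hL := (h (x * x')).2 hD
  rw [← hx] at hL
  exact hL.1.trans (lLe_mul_left _ _)

end ActsSameOnLClasses

end GreenRelations

/-- For a finite regular semigroup `S`, the congruence induced by the morphism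
`S → S^{L′}` is the largest congruence on `S` contained in Green's relation
`L`: it is a congruence, it is contained in `L`, and it contains every
congruence contained in `L`. -/
theorem kernel_of_LM_is_largest_congruence_in_L
    {S : Type*} [Semigroup S] [Fintype S]
    (hreg : ∀ x : S, ∃ y, x = x * y * x) :
    IsCong (ActsSameOnLClasses (S := S)) ∧
    (∀ x y : S, ActsSameOnLClasses x y → LEquiv x y) ∧
    (∀ r : S → S → Prop, IsCong r → (∀ x y : S, r x y → LEquiv x y) →
      ∀ x y : S, r x y → ActsSameOnLClasses x y) := by
  refine ⟨⟨⟨.refl, .symm, .trans⟩, fun a b c h => ⟨h.mul_left c, h.mul_right c⟩⟩,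
    fun x y h => ?_, fun r hr hrL x y hxy => ?_⟩
  · obtain ⟨x', hx⟩ := hreg x
    obtain ⟨y', hy⟩ := hreg y
    exact ⟨h.lLe hx, h.symm.lLe hy⟩
  · exact actsSameOnLClasses_of_forall_lEquiv fun z => hrL _ _ (hr.2 x y z hxy).1
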